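/- (Merged-spine identity underlying SLD-Merge.) Let e* be the lower-rank edge among e1* and e2*; then e* is the minimum-rank edge incident to v in G, and spine(e*) computed in G equals, as a set, the union spine1(e1*) ∪ spine2(e2*). -/

import Mathlib

/-!
Root the trees at `v` and call an edge `f` a record if its rank exceeds the rank of every edge on
the path from `v` to `f`. On a tree, the spine of the minimum-rank edge at `v` is exactly its set
of records: a record `f` other than that edge is the parent of the record of largest rank below
`r f`, and conversely the parent of a record is again a record. Since `G1` and `G2` meet only at
`v`, the path from `v` to an edge of `Gi` stays inside `Gi`, so the records of `G1 ⊔ G2` are those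
of `G1` together with those of `G2`.
-/

/- Single tree setting: `G` is a finite tree with injective edge ranks `r`.
`edgesBetween G e f` is the set of edges strictly between edges `e` and `f`
on the unique tree path connecting them (an edge `g ∉ {e,f}` lies on this path
iff it belongs to every walk containing both `e` and `f`). -/

open SimpleGraph

variable {V : Type*}

/-- The set of edges lying strictly between edges `e` and `f` on the tree path
connecting them (excluding `e` and `f`). -/
def edgesBetween (G : SimpleGraph V) (e f : Sym2 V) : Set (Sym2 V) :=
  {g | g ∈ G.edgeSet ∧ g ≠ e ∧ g ≠ f ∧
    ∀ (a b : V) (w : G.Walk a b), e ∈ w.edges → f ∈ w.edges → g ∈ w.edges}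

/-- `f` is an adjacent superior of `e`: `r e < r f` and every edge `g` on the
path between `e` and `f` satisfies `r g < r e`. -/
def AdjSup (G : SimpleGraph V) (r : Sym2 V → ℕ) (e f : Sym2 V) : Prop :=
  f ∈ G.edgeSet ∧ r e < r f ∧ ∀ g ∈ edgesBetween G e f, r g < r e

/-- `f` is an adjacent inferior of `e`: `r f < r e` and every edge `g` on the
path between `e` and `f` satisfies `r g < r e`. -/
def AdjInf (G : SimpleGraph V) (r : Sym2 V → ℕ) (e f : Sym2 V) : Prop :=
  f ∈ G.edgeSet ∧ r f < r e ∧ ∀ g ∈ edgesBetween G e f, r g < r e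

/-- `f` is the SLD parent of `e`: the minimum-rank adjacent superior of `e`. -/
def IsParent (G : SimpleGraph V) (r : Sym2 V → ℕ) (e f : Sym2 V) : Prop :=
  AdjSup G r e f ∧ ∀ g, AdjSup G r e g → r f ≤ r g

/-- The spine of `e`: the set of edges obtained by iterating the SLD parent
function starting from `e` (including `e` itself). -/
def spine (G : SimpleGraph V) (r : Sym2 V → ℕ) (e : Sym2 V) : Set (Sym2 V) :=
  {f | Relation.ReflTransGen (IsParent G r) e f}

namespace SingleLinkage

open Walk

/-- On a tree, the edges strictly between the vertex `v` and the edge `f`, characterized in the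
same way as `edgesBetween`. -/
def edgesBefore (G : SimpleGraph V) (v : V) (f : Sym2 V) : Set (Sym2 V) :=
  {g | g ∈ G.edgeSet ∧ g ≠ f ∧
    ∀ (a b : V) (w : G.Walk a b), v ∈ w.support → f ∈ w.edges → g ∈ w.edges}

def recordEdges (G : SimpleGraph V) (r : Sym2 V → ℕ) (v : V) : Set (Sym2 V) :=
  {f | f ∈ G.edgeSet ∧ ∀ g ∈ edgesBefore G v f, r g < r f}

variable {G : SimpleGraph V} {v : V} {r : Sym2 V → ℕ} {e f g : Sym2 V}

lemma exists_walk_of_mem_support {a₁ b₁ a₂ b₂ p : V} (w₁ : G.Walk a₁ b₁) (w₂ : G.Walk a₂ b₂)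
    (h₁ : p ∈ w₁.support) (h₂ : p ∈ w₂.support) :
    ∃ w : G.Walk a₁ a₂, (∀ e, e ∈ w.edges ↔ e ∈ w₁.edges ∨ e ∈ w₂.edges) ∧
      ∀ x, x ∈ w.support ↔ x ∈ w₁.support ∨ x ∈ w₂.support := by
  classical
  -- along `w₁`, back to `p`, on to the end of `w₂` and then backwards along all of `w₂`
  refine ⟨w₁.append ((w₁.dropUntil p h₁).reverse.append ((w₂.dropUntil p h₂).append w₂.reverse)),
    fun e ↦ ?_, fun x ↦ ?_⟩
  · have h₁' : e ∈ (w₁.dropUntil p h₁).edges → e ∈ w₁.edges :=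
      (w₁.edges_dropUntil_subset_edges h₁ ·)
    have h₂' : e ∈ (w₂.dropUntil p h₂).edges → e ∈ w₂.edges :=
      (w₂.edges_dropUntil_subset_edges h₂ ·)
    simp only [edges_append, edges_reverse, List.mem_append, List.mem_reverse]
    tauto
  · have h₁' : x ∈ (w₁.dropUntil p h₁).support → x ∈ w₁.support :=
      (w₁.support_dropUntil_subset_support h₁ ·)
    have h₂' : x ∈ (w₂.dropUntil p h₂).support → x ∈ w₂.support :=
      (w₂.support_dropUntil_subset_support h₂ ·)
    simp only [mem_support_append_iff, support_reverse, List.mem_reverse]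
    tauto

lemma edgesBefore_subset_union_edgesBetween :
    edgesBefore G v f ⊆ edgesBefore G v g ∪ {g} ∪ edgesBetween G g f := by
  rintro k ⟨hk, hkf, hwalk⟩
  by_contra hcon
  simp only [Set.mem_union, Set.mem_singleton_iff, not_or] at hcon
  obtain ⟨⟨hkg, hkg'⟩, hkgf⟩ := hcon
  simp only [edgesBefore, edgesBetween, Set.mem_ofPred_eq, not_and, not_forall] at hkg hkgf
  obtain ⟨a₁, b₁, w₁, hv₁, hg₁, hk₁⟩ := hkg hk hkg'
  obtain ⟨a₂, b₂, w₂, hg₂, hf₂, hk₂⟩ := hkgf hk hkg' hkf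
  obtain ⟨w, hwe, hws⟩ := exists_walk_of_mem_support w₁ w₂
    (mem_support_of_mem_edges hg₁ g.out_fst_mem) (mem_support_of_mem_edges hg₂ g.out_fst_mem)
  rcases (hwe k).1 (hwalk _ _ w ((hws v).2 (.inl hv₁)) ((hwe f).2 (.inr hf₂))) with h | h
  exacts [hk₁ h, hk₂ h]

lemma edgesBetween_subset_union_edgesBefore :
    edgesBetween G g f ⊆ edgesBefore G v g ∪ edgesBefore G v f := by
  rintro k ⟨hk, hkg, hkf, hwalk⟩
  by_contra hcon
  simp only [Set.mem_union, not_or, edgesBefore, Set.mem_ofPred_eq, not_and, not_forall] at hcon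
  obtain ⟨a₁, b₁, w₁, hv₁, hg₁, hk₁⟩ := hcon.1 hk hkg
  obtain ⟨a₂, b₂, w₂, hv₂, hf₂, hk₂⟩ := hcon.2 hk hkf
  obtain ⟨w, hwe, -⟩ := exists_walk_of_mem_support w₁ w₂ hv₁ hv₂
  rcases (hwe k).1 (hwalk _ _ w ((hwe g).2 (.inl hg₁)) ((hwe f).2 (.inr hf₂))) with h | h
  exacts [hk₁ h, hk₂ h]

lemma edgesBefore_eq_empty (hf : f ∈ G.edgeSet) (hvf : v ∈ f) : edgesBefore G v f = ∅ := by
  obtain ⟨u, rfl⟩ : ∃ u, f = s(v, u) := ⟨_, (Sym2.other_spec hvf).symm⟩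
  refine Set.eq_empty_of_forall_notMem fun g ⟨_, hgf, hwalk⟩ ↦ hgf ?_
  simpa using hwalk _ _ (cons (G.mem_edgeSet.1 hf) nil) (by simp) (by simp)

lemma edgesBefore_subset_of_mem (hfg : f ∉ edgesBefore G v g) (hg : g ∈ edgesBefore G v f) :
    edgesBefore G v g ⊆ edgesBefore G v f := by
  rintro k ⟨hk, hkg, hwalk⟩
  refine ⟨hk, fun hkf ↦ hfg (hkf ▸ ⟨hk, hkg, hwalk⟩), fun a b w hv hf ↦ ?_⟩
  exact hwalk a b w hv (hg.2.2 a b w hv hf)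

lemma mem_recordEdges_of_adjSup (hg : g ∈ recordEdges G r v) (hgf : AdjSup G r g f) :
    f ∈ recordEdges G r v := by
  obtain ⟨hf, hlt, hbetween⟩ := hgf
  refine ⟨hf, fun k hk ↦ ?_⟩
  rcases edgesBefore_subset_union_edgesBetween (g := g) hk with (hk | hkg) | hk
  exacts [(hg.2 k hk).trans hlt, hkg ▸ hlt, (hbetween k hk).trans hlt]

lemma spine_subset_recordEdges (he : e ∈ G.edgeSet) (hve : v ∈ e) :
    spine G r e ⊆ recordEdges G r v := by
  intro f hf
  induction hf with
  | refl => exact ⟨he, by simp [edgesBefore_eq_empty he hve]⟩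
  | tail _ hparent ih => exact mem_recordEdges_of_adjSup ih hparent.1

/-- The properties of a tree rooted at `v` that the characterization of spines uses; unlike
acyclicity, they pass to `A ⊔ B` when `A` and `B` meet only at `v`. -/
structure IsRootedAt (G : SimpleGraph V) (v : V) : Prop where
  exists_walk : ∀ f ∈ G.edgeSet, ∃ (a b : V) (w : G.Walk a b), v ∈ w.support ∧ f ∈ w.edges
  not_mem_edgesBefore : ∀ {f g}, g ∈ edgesBefore G v f → f ∉ edgesBefore G v g
  exists_incident_mem_edgesBefore :
    ∀ f ∈ G.edgeSet, v ∉ f → ∃ g ∈ edgesBefore G v f, v ∈ g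

section Spine

lemma rank_lt_of_mem_recordEdges (hG : IsRootedAt G v) (hr : Set.InjOn r G.edgeSet)
    (he : e ∈ G.edgeSet) (hmin : ∀ g ∈ G.edgeSet, v ∈ g → r e ≤ r g)
    (hf : f ∈ recordEdges G r v) (hfe : f ≠ e) : r e < r f := by
  by_cases hvf : v ∈ f
  · exact (hmin f hf.1 hvf).lt_of_ne fun h ↦ hfe (hr hf.1 he h.symm)
  · obtain ⟨g, hg, hvg⟩ := hG.exists_incident_mem_edgesBefore f hf.1 hvf
    exact (hmin g hg.1 hvg).trans_lt (hf.2 g hg)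

lemma mem_recordEdges_of_isMaxOn (hG : IsRootedAt G v) (hr : Set.InjOn r G.edgeSet)
    (hg : g ∈ edgesBefore G v f)
    (hmax : ∀ k ∈ edgesBefore G v f, r k ≤ r g) : g ∈ recordEdges G r v := by
  refine ⟨hg.1, fun k hk ↦ ?_⟩
  have hkf := edgesBefore_subset_of_mem (hG.not_mem_edgesBefore hg) hg hk
  exact (hmax k hkf).lt_of_ne fun h ↦ hk.2.1 (hr hk.1 hg.1 h)

variable [Finite V]

lemma rank_lt_of_mem_edgesBefore (hG : IsRootedAt G v) (hr : Set.InjOn r G.edgeSet)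
    (hf : f ∈ recordEdges G r v) (hg : g ∈ G.edgeSet)
    (hmax : ∀ k ∈ recordEdges G r v, r k < r f → r k ≤ r g) {k : Sym2 V}
    (hk : k ∈ edgesBefore G v f) (hkg : k ≠ g) : r k < r g := by
  obtain ⟨m, hm, hmmax⟩ := Set.exists_max_image _ r (Set.toFinite (edgesBefore G v f)) ⟨k, hk⟩
  -- the highest-ranked edge before `f` is itself a record below `f`
  have hmg : r m ≤ r g := hmax m (mem_recordEdges_of_isMaxOn hG hr hm hmmax) (hf.2 m hm)
  exact ((hmmax k hk).trans hmg).lt_of_ne fun h ↦ hkg (hr hk.1 hg h)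

lemma isParent_of_isMaxOn (hG : IsRootedAt G v) (hr : Set.InjOn r G.edgeSet)
    (hf : f ∈ recordEdges G r v) (hg : g ∈ recordEdges G r v)
    (hgf : r g < r f) (hmax : ∀ k ∈ recordEdges G r v, r k < r f → r k ≤ r g) :
    IsParent G r g f := by
  refine ⟨⟨hf.1, hgf, fun k hk ↦ ?_⟩, fun k hk ↦ ?_⟩
  · rcases edgesBetween_subset_union_edgesBefore hk with hk' | hk'
    exacts [hg.2 k hk', rank_lt_of_mem_edgesBefore hG hr hf hg.1 hmax hk' hk.2.1]
  · by_contra! hkf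
    exact (hmax k (mem_recordEdges_of_adjSup hg hk) hkf).not_gt hk.2.1

lemma recordEdges_subset_spine (hG : IsRootedAt G v) (hr : Set.InjOn r G.edgeSet)
    (he : e ∈ G.edgeSet) (hve : v ∈ e)
    (hmin : ∀ g ∈ G.edgeSet, v ∈ g → r e ≤ r g) : recordEdges G r v ⊆ spine G r e := by
  intro f hf
  induction hn : r f using Nat.strong_induction_on generalizing f with
  | _ n ih =>
  by_cases hfe : f = e
  · exact hfe ▸ Relation.ReflTransGen.refl
  obtain ⟨g, ⟨hg, hgf⟩, hmax⟩ := Set.exists_max_image (recordEdges G r v ∩ {g | r g < r f}) r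
    (Set.toFinite _) ⟨e, spine_subset_recordEdges he hve .refl,
      rank_lt_of_mem_recordEdges hG hr he hmin hf hfe⟩
  exact (ih (r g) (hn ▸ hgf) hg rfl).tail
    (isParent_of_isMaxOn hG hr hf hg hgf fun k hk hkf ↦ hmax k ⟨hk, hkf⟩)

theorem spine_eq_recordEdges (hG : IsRootedAt G v) (hr : Set.InjOn r G.edgeSet)
    (he : e ∈ G.edgeSet) (hve : v ∈ e)
    (hmin : ∀ g ∈ G.edgeSet, v ∈ g → r e ≤ r g) : spine G r e = recordEdges G r v :=
  (spine_subset_recordEdges he hve).antisymm (recordEdges_subset_spine hG hr he hve hmin)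

end Spine

lemma _root_.SimpleGraph.IsAcyclic.edges_subset_of_isPath (hG : G.IsAcyclic) {u x a b : V}
    {p : G.Walk u x} (hp : p.IsPath) (w : G.Walk a b) (hu : u ∈ w.support)
    (hx : x ∈ w.support) : p.edges ⊆ w.edges := by
  classical
  let q := (w.takeUntil u hu).reverse.append (w.takeUntil x hx)
  have hpq : p = q.bypass :=
    congrArg Subtype.val ((hG.subsingleton_path u x).elim ⟨p, hp⟩ ⟨_, q.bypass_isPath⟩)
  intro k hk
  rw [hpq] at hk
  have hkq := q.edges_bypass_subset_edges hk
  simp only [q, edges_append, edges_reverse, List.mem_append, List.mem_reverse] at hkq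
  exact hkq.elim (w.edges_takeUntil_subset_edges hu ·) (w.edges_takeUntil_subset_edges hx ·)

lemma edgesBefore_eq_of_isPath_concat (hG : G.IsAcyclic) {x y : V} {p : G.Walk v x}
    {h : G.Adj x y} (hp : (p.concat h).IsPath) : edgesBefore G v s(x, y) = {g | g ∈ p.edges} := by
  have hfp : s(x, y) ∉ p.edges := by
    have := hp.edges_nodup
    rw [edges_concat, List.concat_eq_append, List.nodup_append] at this
    exact fun hf ↦ this.2.2 _ hf _ (List.mem_singleton_self _) rfl
  ext g
  constructor
  · rintro ⟨-, hgf, hwalk⟩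
    have := hwalk _ _ _ (p.concat h).start_mem_support (by simp [edges_concat])
    simpa [edges_concat, hgf] using this
  · intro hg
    refine ⟨p.edges_subset_edgeSet hg, fun hgf ↦ hfp (hgf ▸ hg), fun a b w hv hf ↦ ?_⟩
    refine hG.edges_subset_of_isPath hp w hv
      (mem_support_of_mem_edges hf (Sym2.mem_mk_right x y)) ?_
    rw [edges_concat, List.concat_eq_append]
    exact List.mem_append_left _ hg

lemma exists_isPath_concat {a b : V} (hreach : G.Reachable v a) (hab : G.Adj a b) :
    ∃ (x y : V) (p : G.Walk v x) (h : G.Adj x y), s(x, y) = s(a, b) ∧ (p.concat h).IsPath := by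
  classical
  obtain ⟨q, hq⟩ := hreach.exists_isPath
  by_cases hb : b ∈ q.support
  · refine ⟨b, a, q.takeUntil b hb, hab.symm, Sym2.eq_swap, ?_⟩
    exact (hq.takeUntil hb).concat (endpoint_notMem_support_takeUntil hq hb hab.ne) hab.symm
  · exact ⟨a, b, q, hab, rfl, hq.concat hb hab⟩

lemma exists_edgesBefore_eq_edges (hG : G.IsAcyclic) (hreach : ∀ u ∈ G.support, G.Reachable v u)
    (hf : f ∈ G.edgeSet) :
    ∃ (x y : V) (p : G.Walk v x), G.Adj x y ∧ f = s(x, y) ∧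
      edgesBefore G v f = {g | g ∈ p.edges} := by
  induction f using Sym2.ind with
  | _ a b =>
  obtain ⟨x, y, p, h, hxy, hp⟩ := exists_isPath_concat (hreach a ⟨b, hf⟩) hf
  exact ⟨x, y, p, h, hxy.symm, hxy ▸ edgesBefore_eq_of_isPath_concat hG hp⟩

lemma IsRootedAt.of_isAcyclic (hG : G.IsAcyclic) (hreach : ∀ u ∈ G.support, G.Reachable v u) :
    IsRootedAt G v := by
  refine ⟨fun f hf ↦ ?_, fun {f g} hg hf ↦ ?_, fun f hf hvf ↦ ?_⟩
  · obtain ⟨x, y, p, h, rfl, -⟩ := exists_edgesBefore_eq_edges hG hreach hf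
    exact ⟨_, _, p.concat h, start_mem_support _, by simp [edges_concat]⟩
  · obtain ⟨x, y, p, -, rfl, hbefore⟩ := exists_edgesBefore_eq_edges hG hreach hf.1
    have hgp : g ∈ p.edges := by rwa [hbefore] at hg
    have hfp : s(x, y) ∈ edgesBefore G v s(x, y) := by
      rw [hbefore]
      exact hf.2.2 _ _ p p.start_mem_support hgp
    exact hfp.2.1 rfl
  · obtain ⟨x, y, p, -, rfl, hbefore⟩ := exists_edgesBefore_eq_edges hG hreach hf
    cases p with
    | nil => exact absurd (Sym2.mem_mk_left _ _) hvf
    | @cons _ z _ h q => exact ⟨s(v, z), by simp [hbefore], Sym2.mem_mk_left _ _⟩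

lemma mem_support_of_mem_edgeSet {x : V} (hf : f ∈ G.edgeSet) (hx : x ∈ f) : x ∈ G.support := by
  induction f using Sym2.ind with
  | _ a b => rcases Sym2.mem_iff.1 hx with rfl | rfl
             exacts [⟨b, hf⟩, ⟨a, G.adj_symm hf⟩]

lemma isAcyclic_of_isAcyclic_induce_support (h : (G.induce G.support).IsAcyclic) :
    G.IsAcyclic := by
  intro a c hc
  have hw : ∀ x ∈ c.support, x ∈ G.support := fun x hx ↦ by
    obtain ⟨f, hf, hxf⟩ := (mem_support_iff_exists_mem_edges_of_not_nil hc.not_nil).1 hx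
    exact mem_support_of_mem_edgeSet (c.edges_subset_edgeSet hf) hxf
  exact h _ (IsCycle.of_map (f := (Embedding.induce _).toHom) (by rwa [map_induce c hw]))

lemma IsRootedAt.of_isTree_induce_support (hT : (G.induce G.support).IsTree) (hv : v ∈ G.support) :
    IsRootedAt G v :=
  .of_isAcyclic (isAcyclic_of_isAcyclic_induce_support hT.isAcyclic)
    fun u hu ↦ (hT.connected ⟨v, hv⟩ ⟨u, hu⟩).map (Embedding.induce _).toHom

section Sup

variable {A B : SimpleGraph V}

open Classical in
noncomputable def retract (A : SimpleGraph V) (v x : V) : V := if x ∈ A.support then x else v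

lemma retract_of_mem_support {x : V} (hx : x ∈ A.support) : retract A v x = x := if_pos hx

lemma retract_of_mem_support_right (hAB : A.support ∩ B.support ⊆ {v}) {x : V}
    (hx : x ∈ B.support) : retract A v x = v := by
  by_cases hxA : x ∈ A.support
  · rw [retract_of_mem_support hxA]
    exact hAB ⟨hxA, hx⟩
  · exact if_neg hxA

lemma retract_self : retract A v v = v := by
  unfold retract
  split_ifs <;> rfl

/-- The edges of `B` collapse to `v`, so only the `A`-edges of the walk remain. -/
lemma exists_walk_retract (hAB : A.support ∩ B.support ⊆ {v}) {a b : V} (w : (A ⊔ B).Walk a b) :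
    ∃ w' : A.Walk (retract A v a) (retract A v b),
      (∀ k, k ∈ w'.edges ↔ k ∈ w.edges ∧ k ∈ A.edgeSet) ∧
      ∀ x ∈ w.support, retract A v x ∈ w'.support := by
  induction w with
  | nil => exact ⟨nil, by simp, by simp⟩
  | @cons a x b h t ih =>
    obtain ⟨t', hedges, hsupport⟩ := ih
    by_cases hA : A.Adj a x
    · have ha : retract A v a = a := retract_of_mem_support ⟨x, hA⟩
      have hx : retract A v x = x := retract_of_mem_support ⟨a, hA.symm⟩
      refine ⟨(cons hA (t'.copy hx rfl)).copy ha.symm rfl, fun k ↦ ?_, fun y hy ↦ ?_⟩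
      · simp only [edges_copy, edges_cons, List.mem_cons, hedges]
        rcases eq_or_ne k s(a, x) with rfl | hk
        · simpa using hA
        · simp [hk]
      · simp only [support_copy, support_cons, List.mem_cons] at hy ⊢
        exact hy.imp (fun h ↦ by rw [h, ha]) (hsupport y)
    · have hB : B.Adj a x := h.resolve_left hA
      have hax : retract A v x = retract A v a := by
        rw [retract_of_mem_support_right hAB ⟨a, hB.symm⟩, retract_of_mem_support_right hAB ⟨x, hB⟩]
      refine ⟨t'.copy hax rfl, fun k ↦ ?_, fun y hy ↦ ?_⟩
      · simp only [edges_copy, edges_cons, List.mem_cons, hedges]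
        refine ⟨fun ⟨h, hk⟩ ↦ ⟨.inr h, hk⟩, fun ⟨h, hk⟩ ↦ ⟨h.resolve_left fun hkax ↦ ?_, hk⟩⟩
        exact hA (A.mem_edgeSet.1 (hkax ▸ hk))
      · simp only [support_copy, support_cons, List.mem_cons] at hy ⊢
        exact hy.elim (fun h ↦ h ▸ hax ▸ t'.start_mem_support) (hsupport y)

lemma edgesBefore_sup_left (hAB : A.support ∩ B.support ⊆ {v}) (hA : IsRootedAt A v)
    (hf : f ∈ A.edgeSet) : edgesBefore (A ⊔ B) v f = edgesBefore A v f := by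
  obtain ⟨a₀, b₀, w₀, hv₀, hf₀⟩ := hA.exists_walk f hf
  ext g
  constructor
  · rintro ⟨-, hgf, hwalk⟩
    have hwalkA : ∀ (a b : V) (w : A.Walk a b), v ∈ w.support → f ∈ w.edges → g ∈ w.edges :=
      fun a b w hv hf ↦ by
        simpa using hwalk a b (w.mapLe le_sup_left) (by simpa using hv) (by simpa using hf)
    exact ⟨w₀.edges_subset_edgeSet (hwalkA _ _ w₀ hv₀ hf₀), hgf, hwalkA⟩
  · rintro ⟨hg, hgf, hwalk⟩
    refine ⟨edgeSet_mono le_sup_left hg, hgf, fun a b w hv hfw ↦ ?_⟩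
    obtain ⟨w', hedges, hsupport⟩ := exists_walk_retract hAB w
    have hv' : v ∈ w'.support := by simpa only [retract_self] using hsupport v hv
    exact ((hedges g).1 (hwalk _ _ w' hv' ((hedges f).2 ⟨hfw, hf⟩))).1

lemma edgesBefore_sup_right (hAB : A.support ∩ B.support ⊆ {v}) (hB : IsRootedAt B v)
    (hf : f ∈ B.edgeSet) : edgesBefore (A ⊔ B) v f = edgesBefore B v f := by
  rw [sup_comm]
  exact edgesBefore_sup_left (Set.inter_comm _ _ ▸ hAB) hB hf

lemma IsRootedAt.sup (hAB : A.support ∩ B.support ⊆ {v}) (hA : IsRootedAt A v)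
    (hB : IsRootedAt B v) : IsRootedAt (A ⊔ B) v := by
  refine ⟨fun f hf ↦ ?_, fun {f g} hg hf ↦ ?_, fun f hf hvf ↦ ?_⟩
  · rcases (edgeSet_sup A B ▸ hf : f ∈ A.edgeSet ∪ B.edgeSet) with hf | hf
    · obtain ⟨a, b, w, hv, hfw⟩ := hA.exists_walk f hf
      exact ⟨a, b, w.mapLe le_sup_left, by simpa using hv, by simpa using hfw⟩
    · obtain ⟨a, b, w, hv, hfw⟩ := hB.exists_walk f hf
      exact ⟨a, b, w.mapLe le_sup_right, by simpa using hv, by simpa using hfw⟩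
  · rcases (edgeSet_sup A B ▸ hf.1 : f ∈ A.edgeSet ∪ B.edgeSet) with hfA | hfB
    · rw [edgesBefore_sup_left hAB hA hfA] at hg
      rw [edgesBefore_sup_left hAB hA hg.1] at hf
      exact hA.not_mem_edgesBefore hg hf
    · rw [edgesBefore_sup_right hAB hB hfB] at hg
      rw [edgesBefore_sup_right hAB hB hg.1] at hf
      exact hB.not_mem_edgesBefore hg hf
  · rcases (edgeSet_sup A B ▸ hf : f ∈ A.edgeSet ∪ B.edgeSet) with hf | hf
    · rw [edgesBefore_sup_left hAB hA hf]
      exact hA.exists_incident_mem_edgesBefore f hf hvf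
    · rw [edgesBefore_sup_right hAB hB hf]
      exact hB.exists_incident_mem_edgesBefore f hf hvf

lemma recordEdges_sup (hAB : A.support ∩ B.support ⊆ {v}) (hA : IsRootedAt A v)
    (hB : IsRootedAt B v) : recordEdges (A ⊔ B) r v = recordEdges A r v ∪ recordEdges B r v := by
  ext f
  simp only [recordEdges, Set.mem_union, Set.mem_ofPred_eq, edgeSet_sup]
  constructor
  · rintro ⟨hf | hf, h⟩
    · exact .inl ⟨hf, edgesBefore_sup_left hAB hA hf ▸ h⟩
    · exact .inr ⟨hf, edgesBefore_sup_right hAB hB hf ▸ h⟩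
  · rintro (⟨hf, h⟩ | ⟨hf, h⟩)
    · exact ⟨.inl hf, edgesBefore_sup_left hAB hA hf ▸ h⟩
    · exact ⟨.inr hf, edgesBefore_sup_right hAB hB hf ▸ h⟩

end Sup

end SingleLinkage

open SingleLinkage

/- Merge setting: `G1` and `G2` are finite trees (on their supports) over a
common ambient vertex type, sharing exactly the vertex `v` and no edges, so
`G1 ⊔ G2` is a tree. A single injective rank function `r` is given on the
edges of `G1 ⊔ G2`. `e1s` and `e2s` are the minimum-rank edges incident to
`v` in `G1` and `G2` respectively. -/

variable [Fintype V] (G1 G2 : SimpleGraph V) (v : V) (r : Sym2 V → ℕ)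
  (e1s e2s : Sym2 V)

theorem stmt9
    (h1 : (G1.induce G1.support).IsTree) (h2 : (G2.induce G2.support).IsTree)
    (hsupp : G1.support ∩ G2.support = {v})
    (hr : Set.InjOn r (G1 ⊔ G2).edgeSet)
    (he1 : e1s ∈ G1.edgeSet ∧ v ∈ e1s ∧ ∀ f ∈ G1.edgeSet, v ∈ f → r e1s ≤ r f)
    (he2 : e2s ∈ G2.edgeSet ∧ v ∈ e2s ∧ ∀ f ∈ G2.edgeSet, v ∈ f → r e2s ≤ r f)
    (es : Sym2 V)
    (hes : (es = e1s ∧ r e1s ≤ r e2s) ∨ (es = e2s ∧ r e2s ≤ r e1s)) :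
    (es ∈ (G1 ⊔ G2).edgeSet ∧ v ∈ es ∧
      ∀ f ∈ (G1 ⊔ G2).edgeSet, v ∈ f → r es ≤ r f) ∧
    spine (G1 ⊔ G2) r es = spine G1 r e1s ∪ spine G2 r e2s := by
  obtain ⟨he1, hve1, hmin1⟩ := he1
  obtain ⟨he2, hve2, hmin2⟩ := he2
  have hesG : es ∈ (G1 ⊔ G2).edgeSet ∧ v ∈ es ∧ ∀ f ∈ (G1 ⊔ G2).edgeSet, v ∈ f → r es ≤ r f := by
    simp only [edgeSet_sup, Set.mem_union]
    rcases hes with ⟨rfl, hle⟩ | ⟨rfl, hle⟩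
    · exact ⟨.inl he1, hve1, fun f hf hvf ↦ hf.elim (hmin1 f · hvf) (hle.trans <| hmin2 f · hvf)⟩
    · exact ⟨.inr he2, hve2, fun f hf hvf ↦ hf.elim (hle.trans <| hmin1 f · hvf) (hmin2 f · hvf)⟩
  have hG1 := IsRootedAt.of_isTree_induce_support h1 (mem_support_of_mem_edgeSet he1 hve1)
  have hG2 := IsRootedAt.of_isTree_induce_support h2 (mem_support_of_mem_edgeSet he2 hve2)
  refine ⟨hesG, ?_⟩
  rw [spine_eq_recordEdges (hG1.sup hsupp.le hG2) hr hesG.1 hesG.2.1 hesG.2.2,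
    spine_eq_recordEdges hG1 (hr.mono (edgeSet_mono le_sup_left)) he1 hve1 hmin1,
    spine_eq_recordEdges hG2 (hr.mono (edgeSet_mono le_sup_right)) he2 hve2 hmin2,
    recordEdges_sup hsupp.le hG1 hG2]
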